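/- Suppose ρ_K < 0. If f ∈ F_K is not in the convex hull conv(Yφ̃_X) = {Σ_i p_i y_i φ̃_{x_i} : p ∈ Δ_n}, then ‖f‖_K > |ρ_K|. Equivalently, the closed ball of radius |ρ_K| in F_K is contained in conv(Yφ̃_X). -/

import Mathlib

/-!
Suppose `f` is not a convex combination of the `v i`. The set `C` of such combinations is compact
and convex, so `f` has a nearest point `c₀ ∈ C`, and the unit vector `u` pointing from `f` to
`c₀` satisfies `⟪u, c⟫ ≥ ⟪u, f⟫ + ‖c₀ - f‖` on `C`. Hence the margin of `u` is at least
`-‖f‖ + ‖c₀ - f‖ > -‖f‖ ≥ ρ`, contradicting the definition of `ρ` as a supremum of margins.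
-/

open scoped RealInnerProductSpace

section Separation

variable {F : Type*} [NormedAddCommGroup F] [InnerProductSpace ℝ F] {K : Set F} {f : F}

theorem exists_inner_add_norm_sq_le_of_notMem (hne : K.Nonempty) (hcomplete : IsComplete K)
    (hconvex : Convex ℝ K) (hf : f ∉ K) :
    ∃ w : F, w ≠ 0 ∧ ∀ c ∈ K, ⟪w, f⟫ + ‖w‖ ^ 2 ≤ ⟪w, c⟫ := by
  obtain ⟨c₀, hc₀, hmin⟩ := exists_norm_eq_iInf_of_complete_convex hne hcomplete hconvex f
  rw [norm_eq_iInf_iff_real_inner_le_zero hconvex hc₀] at hmin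
  refine ⟨c₀ - f, sub_ne_zero.2 fun h ↦ hf (h ▸ hc₀), fun c hc ↦ ?_⟩
  have hobtuse : 0 ≤ ⟪c₀ - f, c - c₀⟫ := by
    rw [← neg_sub f c₀, inner_neg_left]
    exact neg_nonneg.2 (hmin c hc)
  have hsplit : ⟪c₀ - f, c⟫ = ⟪c₀ - f, f⟫ + ⟪c₀ - f, c₀ - f⟫ + ⟪c₀ - f, c - c₀⟫ := by
    rw [← inner_add_right, ← inner_add_right]
    congr 1
    abel
  rw [hsplit, real_inner_self_eq_norm_sq]
  linarith

theorem exists_norm_eq_one_inner_add_le_of_notMem (hne : K.Nonempty) (hcomplete : IsComplete K)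
    (hconvex : Convex ℝ K) (hf : f ∉ K) :
    ∃ u : F, ‖u‖ = 1 ∧ ∃ d > 0, ∀ c ∈ K, ⟪u, f⟫ + d ≤ ⟪u, c⟫ := by
  obtain ⟨w, hw, hsep⟩ := exists_inner_add_norm_sq_le_of_notMem hne hcomplete hconvex hf
  have hw' : 0 < ‖w‖ := norm_pos_iff.2 hw
  refine ⟨‖w‖⁻¹ • w, norm_smul_inv_norm hw, ‖w‖, hw', fun c hc ↦ ?_⟩
  rw [real_inner_smul_left, real_inner_smul_left, ← mul_le_mul_iff_right₀ hw', mul_add,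
    ← mul_assoc, ← mul_assoc, mul_inv_cancel₀ hw'.ne', one_mul, one_mul, ← sq]
  exact hsep c hc

end Separation

section SimplexMargin

variable {ι E : Type*} [Fintype ι] [NormedAddCommGroup E] [InnerProductSpace ℝ E]

/-- The paper's `min_{p ∈ Δ} ⟨g, Σ pᵢ vᵢ⟩`, so that `ρ_K = ⨆_{‖g‖ = 1} simplexMargin v g`. -/
noncomputable def simplexMargin (v : ι → E) (g : E) : ℝ :=
  ⨅ p : stdSimplex ℝ ι, ⟪g, ∑ i, (p : ι → ℝ) i • v i⟫

theorem simplexMargin_le (v : ι → E) (g : E) {p : ι → ℝ} (hp : p ∈ stdSimplex ℝ ι) :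
    simplexMargin v g ≤ ⟪g, ∑ i, p i • v i⟫ := by
  have hbdd := (isCompact_stdSimplex ℝ ι).bddBelow_image
    (f := fun p : ι → ℝ ↦ ⟪g, ∑ i, p i • v i⟫) (by fun_prop)
  rw [← Subtype.range_coe (s := stdSimplex ℝ ι), ← Set.range_comp] at hbdd
  exact ciInf_le hbdd ⟨p, hp⟩

theorem le_simplexMargin [Nonempty ι] (v : ι → E) (g : E) {a : ℝ}
    (h : ∀ p ∈ stdSimplex ℝ ι, a ≤ ⟪g, ∑ i, p i • v i⟫) : a ≤ simplexMargin v g :=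
  le_ciInf fun p ↦ h p p.2

theorem bddAbove_range_simplexMargin [Nonempty ι] (v : ι → E) :
    BddAbove (Set.range fun g : {g : E // ‖g‖ = 1} ↦ simplexMargin v g) := by
  classical
  let i₀ := Classical.arbitrary ι
  refine ⟨‖v i₀‖, ?_⟩
  rintro _ ⟨g, rfl⟩
  calc simplexMargin v g ≤ ⟪(g : E), ∑ i, (Pi.single i₀ 1 : ι → ℝ) i • v i⟫ :=
        simplexMargin_le v g (single_mem_stdSimplex ℝ i₀)
    _ = ⟪(g : E), v i₀⟫ := by simp [Pi.single_apply]
    _ ≤ ‖(g : E)‖ * ‖v i₀‖ := real_inner_le_norm _ _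
    _ = ‖v i₀‖ := by rw [g.2, one_mul]

end SimplexMargin

theorem stmt10_general (n : ℕ) [NeZero n] {H : Type*} [NormedAddCommGroup H] [InnerProductSpace ℝ H]
    (v : Fin n → H)
    (ρ : ℝ)
    (hρ : ρ = ⨆ f : {f : H // ‖f‖ = 1},
      ⨅ p : stdSimplex ℝ (Fin n), ⟪(f : H), ∑ i, (p : Fin n → ℝ) i • v i⟫)
    (hneg : ρ < 0) :
    ∀ f : H, ‖f‖ ≤ |ρ| → ∃ p ∈ stdSimplex ℝ (Fin n), f = ∑ i, p i • v i := by
  intro f hf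
  by_contra hcon
  let C := Fintype.linearCombination ℝ v '' stdSimplex ℝ (Fin n)
  have hfC : f ∉ C := fun ⟨p, hp, hpf⟩ ↦ hcon ⟨p, hp, hpf.symm⟩
  obtain ⟨u, hu, d, hd, hsep⟩ := exists_norm_eq_one_inner_add_le_of_notMem
    (Set.image_nonempty.2 ⟨_, single_mem_stdSimplex ℝ 0⟩)
    ((isCompact_stdSimplex ℝ _).image (LinearMap.continuous_of_finiteDimensional _)).isComplete
    ((convex_stdSimplex ℝ _).linear_image _) hfC
  have hρf : ρ ≤ ⟪u, f⟫ := by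
    have := neg_le_of_abs_le (abs_real_inner_le_norm u f)
    rw [abs_of_neg hneg] at hf
    rw [hu, one_mul] at this
    linarith
  have hlower : ρ + d ≤ simplexMargin v u :=
    le_simplexMargin v u fun p hp ↦ by
      have : ⟪u, f⟫ + d ≤ ⟪u, ∑ i, p i • v i⟫ := hsep _ ⟨p, hp, rfl⟩
      linarith
  have hupper : simplexMargin v u ≤ ρ :=
    hρ ▸ le_ciSup (bddAbove_range_simplexMargin v) ⟨u, hu⟩
  linarith

theorem stmt10 (n : ℕ) [NeZero n] {H : Type*} [NormedAddCommGroup H] [InnerProductSpace ℝ H]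
    [CompleteSpace H]
    (v : Fin n → H) (hv : ∀ i, ‖v i‖ = 1)
    (ρ : ℝ)
    (hρ : ρ = ⨆ f : {f : H // ‖f‖ = 1},
      ⨅ p : stdSimplex ℝ (Fin n), ⟪(f : H), ∑ i, (p : Fin n → ℝ) i • v i⟫)
    (hneg : ρ < 0) :
    ∀ f : H, ‖f‖ ≤ |ρ| → ∃ p ∈ stdSimplex ℝ (Fin n), f = ∑ i, p i • v i :=
  stmt10_general n v ρ hρ hneg
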